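/- Suppose the entries x_i of X are independent Poisson random variables with rates m_i = ∏_p a_p(i_p) (the rank-one PCP model). Then for every p and j, E[x_p(j)] = a_p(j) ∏_{q≠p} λ_q = λ a_p(j)/λ_p, and consequently the expectation of the negative Hessian of the rank-one PCP loglikelihood is the block matrix I(θ) whose (p,p) diagonal block has (i,j) entry [i = j] · λ/(λ_p a_p(i)) and whose (p,q) off-diagonal block (p ≠ q) has every entry equal to λ/(λ_p λ_q). -/

import Mathlib

open Finset

noncomputable section

variable {P : ℕ} {N : Fin P → ℕ}

/-- Rank-one parameter tensor entry `m_i = ∏_p a_p(i_p)`. -/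
def mOne (a : (p : Fin P) → Fin (N p) → ℝ) (i : (p : Fin P) → Fin (N p)) : ℝ :=
  ∏ p, a p (i p)

/-- Rank-one PCP loglikelihood `ℓ(X|θ) = Σ_i [ x_i log m_i − m_i − log(x_i!) ]`. -/
def llik1 (a : (p : Fin P) → Fin (N p) → ℝ) (X : ((p : Fin P) → Fin (N p)) → ℕ) : ℝ :=
  ∑ i : (p : Fin P) → Fin (N p),
    ((X i : ℝ) * Real.log (mOne a i) - mOne a i - Real.log (Nat.factorial (X i) : ℝ))

/-- Mode-`p` marginal sum `x_p(j) = Σ_{i : i_p = j} x_i` (as a real number). -/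
def xmarg (X : ((p : Fin P) → Fin (N p)) → ℕ) (p : Fin P) (j : Fin (N p)) : ℝ :=
  ∑ i ∈ Finset.univ.filter (fun i : (q : Fin P) → Fin (N q) => i p = j), (X i : ℝ)

/-- Factor sum `λ_p = Σ_j a_p(j)`. -/
def lam1 (a : (p : Fin P) → Fin (N p) → ℝ) (p : Fin P) : ℝ :=
  ∑ j, a p j

/-- Probability of the count tensor `X` under the rank-one PCP model: the product of
the Poisson probabilities `e^{-m_i} m_i^{x_i} / x_i!` over all multi-indices (the
entries of `X` are independent Poisson with rates `m_i = ∏_p a_p(i_p)`). -/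
def pmf1 (a : (p : Fin P) → Fin (N p) → ℝ) (X : ((p : Fin P) → Fin (N p)) → ℕ) : ℝ :=
  ∏ i : (p : Fin P) → Fin (N p),
    Real.exp (-(mOne a i)) * mOne a i ^ X i / (Nat.factorial (X i) : ℝ)

open scoped Nat

/-! Under the rank-one model the law of the count tensor is the product of its one-dimensional
Poisson marginals, so summing a function of a single entry against it reduces to a
one-dimensional Poisson sum: the probabilities sum to `1` and `E[x_i] = m_i`. Summing over the
slice `i_p = j` and expanding `∏_q a_q(i_q)` as a product of sums gives
`E[x_p(j)] = a_p(j) ∏_{q ≠ p} λ_q`, which yields the diagonal blocks after division by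
`a_p(i)²`; the off-diagonal blocks are constant and so equal their own expectation. -/

theorem hasSum_exp_neg_mul_pow_div_factorial (μ : ℝ) :
    HasSum (fun n : ℕ => Real.exp (-μ) * μ ^ n / n !) 1 := by
  have h := (Real.exp_eq_exp_ℝ ▸ NormedSpace.expSeries_div_hasSum_exp μ).mul_left (Real.exp (-μ))
  rw [← Real.exp_add, neg_add_cancel, Real.exp_zero] at h
  simpa only [mul_div_assoc] using h

theorem hasSum_nat_mul_exp_neg_mul_pow_div_factorial (μ : ℝ) :
    HasSum (fun n : ℕ => n * (Real.exp (-μ) * μ ^ n / n !)) μ := by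
  rw [← hasSum_nat_add_iff' 1, sum_range_one, Nat.cast_zero, zero_mul, sub_zero]
  have h := (hasSum_exp_neg_mul_pow_div_factorial μ).mul_left μ
  rw [mul_one] at h
  refine h.congr_fun fun n => ?_
  rw [Nat.factorial_succ]
  push_cast
  field_simp
  ring

theorem exp_neg_mul_pow_div_factorial_nonneg {μ : ℝ} (hμ : 0 ≤ μ) (n : ℕ) :
    0 ≤ Real.exp (-μ) * μ ^ n / n ! :=
  div_nonneg (mul_nonneg (Real.exp_nonneg _) (pow_nonneg hμ n)) n.factorial.cast_nonneg

theorem hasSum_pi_prod_of_nonneg {ι β : Type*} [hι : Fintype ι] (f : ι → β → ℝ) (S : ι → ℝ)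
    (hf : ∀ i b, 0 ≤ f i b) (hS : ∀ i, HasSum (f i) (S i)) :
    HasSum (fun x : ι → β => ∏ i, f i (x i)) (∏ i, S i) := by
  revert f S
  refine Fintype.induction_empty_option ?_ ?_ ?_ ι (h_fintype := hι)
  · intro α ι _ e ih f S hf hS
    let := Fintype.ofEquiv ι e.symm
    have h := ih (fun a => f (e a)) (fun a => S (e a)) (fun a => hf (e a)) (fun a => hS (e a))
    rw [e.prod_comp S] at h
    refine ((Equiv.arrowCongr e.symm (Equiv.refl β)).hasSum_iff.mpr h).congr_fun fun x => ?_
    exact (e.prod_comp fun i => f i (x i)).symm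
  · intro f S _ _
    simp
  · intro α _ ih f S hf hS
    have h := ih (fun a => f (some a)) (fun a => S (some a)) (fun a => hf (some a))
      (fun a => hS (some a))
    have hprod := (hS none).mul h ((hS none).summable.mul_of_nonneg h.summable (hf none)
      fun x => prod_nonneg fun a _ => hf (some a) (x a))
    rw [Fintype.prod_option]
    refine (Equiv.piOptionEquivProd.hasSum_iff.mpr hprod).congr_fun fun x => ?_
    exact Fintype.prod_option _

theorem hasSum_pi_prod_mul_apply_of_nonneg {ι : Type*} [Fintype ι] [DecidableEq ι]
    (f : ι → ℕ → ℝ) (hf : ∀ i n, 0 ≤ f i n) (h1 : ∀ i, HasSum (f i) 1) (i₀ : ι) {M : ℝ}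
    (hM : HasSum (fun n : ℕ => n * f i₀ n) M) :
    HasSum (fun x : ι → ℕ => (∏ i, f i (x i)) * x i₀) M := by
  have h := hasSum_pi_prod_of_nonneg (fun i (n : ℕ) => (if i = i₀ then (n : ℝ) else 1) * f i n)
    (fun i => if i = i₀ then M else 1)
    (fun i n => mul_nonneg (by split_ifs <;> positivity) (hf i n))
    (fun i => by split_ifs with h <;> simp [h, hM, h1])
  rw [Fintype.prod_ite_eq'] at h
  refine h.congr_fun fun x => ?_
  rw [prod_mul_distrib, Fintype.prod_ite_eq', mul_comm]

theorem sum_filter_apply_eq_mul_prod_erase_sum {ι R : Type*} {κ : ι → Type*} [Fintype ι]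
    [DecidableEq ι] [∀ i, Fintype (κ i)] [∀ i, DecidableEq (κ i)] [CommSemiring R]
    (f : (i : ι) → κ i → R) (p : ι) (j : κ p) :
    ∑ x ∈ univ.filter (fun x : (i : ι) → κ i => x p = j), ∏ i, f i (x i) =
      f p j * ∏ i ∈ univ.erase p, ∑ k, f i k := by
  have hfilter : univ.filter (fun x : (i : ι) → κ i => x p = j) =
      Fintype.piFinset (Function.update (fun i => univ) p {j}) := by
    ext x
    simp only [mem_filter, mem_univ, true_and, Fintype.mem_piFinset]
    refine ⟨fun hx i => ?_, fun hx => by simpa using hx p⟩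
    rcases eq_or_ne i p with rfl | hi
    · simp [hx]
    · simp [hi]
  rw [hfilter, ← prod_univ_sum, ← mul_prod_erase univ _ (mem_univ p)]
  congr 1
  · simp
  · exact prod_congr rfl fun i hi => by rw [Function.update_of_ne (ne_of_mem_erase hi)]

section RankOne

variable {a : (p : Fin P) → Fin (N p) → ℝ}

theorem mOne_nonneg (ha : ∀ p j, 0 ≤ a p j) (i : (p : Fin P) → Fin (N p)) : 0 ≤ mOne a i :=
  prod_nonneg fun p _ => ha p (i p)

theorem hasSum_pmf1 (ha : ∀ p j, 0 ≤ a p j) : HasSum (pmf1 a) 1 := by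
  have h := hasSum_pi_prod_of_nonneg _ (fun _ => 1)
    (fun i => exp_neg_mul_pow_div_factorial_nonneg (mOne_nonneg ha i))
    (fun i => hasSum_exp_neg_mul_pow_div_factorial (mOne a i))
  rwa [prod_const_one] at h

theorem hasSum_pmf1_mul_apply (ha : ∀ p j, 0 ≤ a p j) (i : (p : Fin P) → Fin (N p)) :
    HasSum (fun X => pmf1 a X * X i) (mOne a i) :=
  hasSum_pi_prod_mul_apply_of_nonneg _
    (fun i => exp_neg_mul_pow_div_factorial_nonneg (mOne_nonneg ha i))
    (fun i => hasSum_exp_neg_mul_pow_div_factorial (mOne a i)) i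
    (hasSum_nat_mul_exp_neg_mul_pow_div_factorial (mOne a i))

theorem hasSum_pmf1_mul_xmarg (ha : ∀ p j, 0 ≤ a p j) (p : Fin P) (j : Fin (N p)) :
    HasSum (fun X => pmf1 a X * xmarg X p j) (a p j * ∏ q ∈ univ.erase p, lam1 a q) := by
  unfold lam1
  rw [← sum_filter_apply_eq_mul_prod_erase_sum a p j]
  simp_rw [xmarg, mul_sum]
  exact hasSum_sum fun i _ => hasSum_pmf1_mul_apply ha i

theorem lam1_pos (ha : ∀ p j, 0 < a p j) {p : Fin P} (j : Fin (N p)) : 0 < lam1 a p :=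
  (ha p j).trans_le (single_le_sum (fun k _ => (ha p k).le) (mem_univ j))

end RankOne

theorem stmt_16_general (P : ℕ) (N : Fin P → ℕ)
    (a : (p : Fin P) → Fin (N p) → ℝ) (ha : ∀ p j, 0 < a p j) :
    (∀ (p : Fin P) (j : Fin (N p)),
      (∑' X : ((q : Fin P) → Fin (N q)) → ℕ, pmf1 a X * xmarg X p j) =
          a p j * ∏ q ∈ Finset.univ.erase p, lam1 a q ∧
        a p j * ∏ q ∈ Finset.univ.erase p, lam1 a q =
          (∏ q, lam1 a q) * a p j / lam1 a p) ∧
    (∀ (p : Fin P) (i j : Fin (N p)),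
      ∑' X : ((q : Fin P) → Fin (N q)) → ℕ,
          pmf1 a X * (if i = j then xmarg X p i / (a p i) ^ 2 else 0) =
        (if i = j then (∏ q, lam1 a q) / (lam1 a p * a p i) else 0)) ∧
    (∀ (p q : Fin P), p ≠ q →
      ∑' X : ((q' : Fin P) → Fin (N q')) → ℕ,
          pmf1 a X * ((∏ s, lam1 a s) / (lam1 a p * lam1 a q)) =
        (∏ s, lam1 a s) / (lam1 a p * lam1 a q)) := by
  have ha₀ : ∀ p j, 0 ≤ a p j := fun p j => (ha p j).le
  have hmean p j := (hasSum_pmf1_mul_xmarg ha₀ p j).tsum_eq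
  have hprod (p : Fin P) (j : Fin (N p)) :
      a p j * ∏ q ∈ univ.erase p, lam1 a q = (∏ q, lam1 a q) * a p j / lam1 a p := by
    rw [← mul_prod_erase univ _ (mem_univ p)]
    field_simp [(lam1_pos ha j).ne']
  refine ⟨fun p j => ⟨hmean p j, hprod p j⟩, fun p i j => ?_, fun p q _ => ?_⟩
  · split_ifs
    · simp_rw [← mul_div_assoc]
      rw [tsum_div_const, hmean, hprod]
      field_simp [(ha p i).ne']
    · simp
  · rw [tsum_mul_right, (hasSum_pmf1 ha₀).tsum_eq, one_mul]

/-- **Expected Fisher information of the rank-one PCP model.** Under the rank-one PCP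
model, `E[x_p(j)] = a_p(j) ∏_{q≠p} λ_q = λ a_p(j)/λ_p`, and consequently the
expectation of the negative Hessian of the loglikelihood (whose `(p,p)` block is
`diag(x_p(i)/a_p(i)²)` and whose `(p,q)` block, `p ≠ q`, is constant `λ/(λ_p λ_q)`) is
the block matrix with `(p,p)` block entries `[i = j]·λ/(λ_p a_p(i))` and constant
`(p,q)` off-diagonal blocks `λ/(λ_p λ_q)`. Expectations are sums over all count
tensors weighted by their model probability. -/
theorem stmt_16 (P : ℕ) (hP : 2 ≤ P) (N : Fin P → ℕ) (hN : ∀ p, 1 ≤ N p)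
    (a : (p : Fin P) → Fin (N p) → ℝ) (ha : ∀ p j, 0 < a p j) :
    (∀ (p : Fin P) (j : Fin (N p)),
      (∑' X : ((q : Fin P) → Fin (N q)) → ℕ, pmf1 a X * xmarg X p j) =
          a p j * ∏ q ∈ Finset.univ.erase p, lam1 a q ∧
        a p j * ∏ q ∈ Finset.univ.erase p, lam1 a q =
          (∏ q, lam1 a q) * a p j / lam1 a p) ∧
    (∀ (p : Fin P) (i j : Fin (N p)),
      ∑' X : ((q : Fin P) → Fin (N q)) → ℕ,
          pmf1 a X * (if i = j then xmarg X p i / (a p i) ^ 2 else 0) =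
        (if i = j then (∏ q, lam1 a q) / (lam1 a p * a p i) else 0)) ∧
    (∀ (p q : Fin P), p ≠ q →
      ∑' X : ((q' : Fin P) → Fin (N q')) → ℕ,
          pmf1 a X * ((∏ s, lam1 a s) / (lam1 a p * lam1 a q)) =
        (∏ s, lam1 a s) / (lam1 a p * lam1 a q)) :=
  stmt_16_general P N a ha
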